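/- Let Q be a commutative nontrivial ZDF involutive quantale, X a set, and A a commutative von Neumann unital *-subsemialgebra of Hom(X,X). The map ξ_A : Spec_G(A) → Spec_P(A) sending a character ρ to its kernel ker ρ is well-defined and surjective, it is a topological quotient map for the Zariski topologies, and ξ_A(ρ₁) = ξ_A(ρ₂) holds if and only if ρ₁ and ρ₂ are topologically indistinguishable in the Zariski topology on Spec_G(A) (every open set contains ρ₁ if and only if it contains ρ₂). -/

import Mathlib

open Classical

noncomputable section

universe u v

/-- A commutative involutive quantale: a complete lattice with a commutative
monoid operation distributing over arbitrary joins, together with a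
join-preserving involution compatible with multiplication and unit. -/
structure CommInvQuantale (Q : Type u) [CompleteLattice Q] : Type u where
  mul : Q → Q → Q
  one : Q
  mul_comm : ∀ a b : Q, mul a b = mul b a
  mul_assoc : ∀ a b c : Q, mul (mul a b) c = mul a (mul b c)
  one_mul : ∀ a : Q, mul one a = a
  mul_sSup : ∀ (a : Q) (S : Set Q), mul a (sSup S) = ⨆ y ∈ S, mul a y
  inv : Q → Q
  inv_inv : ∀ a : Q, inv (inv a) = a
  inv_sSup : ∀ S : Set Q, inv (sSup S) = ⨆ y ∈ S, inv y
  inv_mul : ∀ a b : Q, inv (mul a b) = mul (inv a) (inv b)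
  inv_one : inv one = one

namespace CommInvQuantale

variable {Q : Type u} [CompleteLattice Q] {X : Type v}

/-- Zero-divisor free: `x·y = 0` implies `x = 0` or `y = 0` (where `0 = ⊥`). -/
def ZDF (Qd : CommInvQuantale Q) : Prop :=
  ∀ a b : Q, Qd.mul a b = ⊥ → a = ⊥ ∨ b = ⊥

/-- Nontrivial: `1 ≠ 0`. -/
def NontrivialQ (Qd : CommInvQuantale Q) : Prop := Qd.one ≠ (⊥ : Q)

/-- The zero `Q`-relation. -/
def qzero : X → X → Q := fun _ _ => (⊥ : Q)

/-- The support of a `Q`-relation. -/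
def supp (f : X → X → Q) : Set X := {x | ∃ y, f x y ≠ (⊥ : Q)}

/-- The cosupport of a `Q`-relation. -/
def cosupp (f : X → X → Q) : Set X := {x | ∃ y, f y x ≠ (⊥ : Q)}

/-- The kernel of a character of `A`. -/
def kerChar (A : Set (X → X → Q)) (ρ : (X → X → Q) → Q) : Set (X → X → Q) :=
  {f ∈ A | ρ f = (⊥ : Q)}

/-- The map `w : Q → 2` sending `0` to `0` and every nonzero element to `1`
(with `2` modelled by `Bool`). -/
def wmap : Q → Bool := fun q => if q = (⊥ : Q) then false else true

/-- The kernel of a homomorphism `γ : A → 2` (with `2` modelled by `Bool`). -/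
def kerTwo (A : Set (X → X → Q)) (γ : (X → X → Q) → Bool) : Set (X → X → Q) :=
  {f ∈ A | γ f = false}

variable (Qd : CommInvQuantale Q)

/-- Composition of `Q`-relations: `(f ∘ g)(x,z) = ⋁_y g(x,y) · f(y,z)`,
so `qcomp Qd f g` is "`f` after `g`". -/
def qcomp (f g : X → X → Q) : X → X → Q := fun x z => ⨆ y : X, Qd.mul (g x y) (f y z)

/-- The identity `Q`-relation. -/
def qid : X → X → Q := fun x y => if x = y then Qd.one else ⊥

/-- The dagger of a `Q`-relation: `f†(x,y) = f(y,x)*`. -/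
def qdag (f : X → X → Q) : X → X → Q := fun x y => Qd.inv (f y x)

/-- Scalar multiplication of a `Q`-relation: `(q•f)(x,y) = q·f(x,y)`. -/
def qsmul (q : Q) (f : X → X → Q) : X → X → Q := fun x y => Qd.mul q (f x y)

/-- A commutative unital *-subsemialgebra of `Hom(X,X)`: contains the zero and
identity relations, closed under pointwise binary join, composition, scalar
multiplication and dagger, and composition is commutative on it. -/
structure IsSubalg (A : Set (X → X → Q)) : Prop where
  zero_mem : qzero ∈ A
  id_mem : Qd.qid ∈ A
  sup_mem : ∀ f ∈ A, ∀ g ∈ A, f ⊔ g ∈ A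
  comp_mem : ∀ f ∈ A, ∀ g ∈ A, Qd.qcomp f g ∈ A
  smul_mem : ∀ (q : Q), ∀ f ∈ A, Qd.qsmul q f ∈ A
  dag_mem : ∀ f ∈ A, Qd.qdag f ∈ A
  comp_comm : ∀ f ∈ A, ∀ g ∈ A, Qd.qcomp f g = Qd.qcomp g f

/-- The commutant of a set of `Q`-relations. -/
def commutant (B : Set (X → X → Q)) : Set (X → X → Q) :=
  { f | ∀ g ∈ B, Qd.qcomp f g = Qd.qcomp g f }

/-- A commutative von Neumann unital *-subsemialgebra: a commutative unital
*-subsemialgebra equal to its double commutant. -/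
def IsVN (A : Set (X → X → Q)) : Prop :=
  Qd.IsSubalg A ∧ Qd.commutant (Qd.commutant A) = A

/-- A character of `A`: a map `ρ : Hom(X,X) → Q` with `ρ(0) = 0`, `ρ(id) = 1`,
preserving binary joins, composition and dagger on `A`. -/
structure IsChar (A : Set (X → X → Q)) (ρ : (X → X → Q) → Q) : Prop where
  map_zero : ρ qzero = (⊥ : Q)
  map_id : ρ Qd.qid = Qd.one
  map_sup : ∀ f ∈ A, ∀ g ∈ A, ρ (f ⊔ g) = ρ f ⊔ ρ g
  map_comp : ∀ f ∈ A, ∀ g ∈ A, ρ (Qd.qcomp f g) = Qd.mul (ρ f) (ρ g)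
  map_dag : ∀ f ∈ A, ρ (Qd.qdag f) = Qd.inv (ρ f)

/-- An ideal of `A`. -/
structure IsIdeal (A J : Set (X → X → Q)) : Prop where
  subset : J ⊆ A
  zero_mem : qzero ∈ J
  sup_mem : ∀ a ∈ J, ∀ b ∈ J, a ⊔ b ∈ J
  absorb : ∀ f ∈ A, ∀ a ∈ J, Qd.qcomp f a ∈ J

/-- A prime k*-ideal of `A`: a proper prime ideal which is a k-ideal closed
under dagger. -/
structure IsPrimeKStarIdeal (A J : Set (X → X → Q)) : Prop where
  ideal : Qd.IsIdeal A J
  proper : J ≠ A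
  prime : ∀ f ∈ A, ∀ g ∈ A, Qd.qcomp f g ∈ J → f ∈ J ∨ g ∈ J
  kideal : ∀ a ∈ J, ∀ b ∈ A, a ⊔ b ∈ J → b ∈ J
  dag_mem : ∀ a ∈ J, Qd.qdag a ∈ J

/-- A global section of the Gelfand spectrum over `X`: an assignment of a
character to every commutative von Neumann unital *-subsemialgebra of
`Hom(X,X)`, compatible with restriction along inclusions. -/
def IsGelfandGlobalSection (ρ : Set (X → X → Q) → (X → X → Q) → Q) : Prop :=
  (∀ A : Set (X → X → Q), Qd.IsVN A → Qd.IsChar A (ρ A)) ∧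
  (∀ A B : Set (X → X → Q), Qd.IsVN A → Qd.IsVN B → A ⊆ B → ∀ f ∈ A, ρ A f = ρ B f)

/-- A global section of the prime spectrum over `X`: an assignment of a prime
k*-ideal to every commutative von Neumann unital *-subsemialgebra of
`Hom(X,X)`, compatible with restriction along inclusions. -/
def IsPrimeGlobalSection (χ : Set (X → X → Q) → Set (X → X → Q)) : Prop :=
  (∀ A : Set (X → X → Q), Qd.IsVN A → Qd.IsPrimeKStarIdeal A (χ A)) ∧
  (∀ A B : Set (X → X → Q), Qd.IsVN A → Qd.IsVN B → A ⊆ B → χ A = A ∩ χ B)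

/-- An idempotent element of `A`. -/
def IsIdem (A : Set (X → X → Q)) (p : X → X → Q) : Prop :=
  p ∈ A ∧ Qd.qcomp p p = p

/-- A subunital idempotent of `A`: an idempotent with an orthogonal idempotent
complement summing to the identity. -/
def IsSubunital (A : Set (X → X → Q)) (p : X → X → Q) : Prop :=
  Qd.IsIdem A p ∧ ∃ q, Qd.IsIdem A q ∧ Qd.qcomp p q = qzero ∧ p ⊔ q = Qd.qid

/-- A primitive subunital idempotent of `A`. -/
def IsPrimitive (A : Set (X → X → Q)) (p : X → X → Q) : Prop :=
  Qd.IsSubunital A p ∧ p ≠ qzero ∧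
    ¬ ∃ s t, Qd.IsSubunital A s ∧ s ≠ qzero ∧ Qd.IsSubunital A t ∧ t ≠ qzero ∧
      Qd.qcomp s t = qzero ∧ s ⊔ t = p

/-- The unique quantale map `! : 2 → Q` (with `2` modelled by `Bool`). -/
def bang : Bool → Q := fun b => if b then Qd.one else ⊥

/-- A homomorphism `γ : A → 2` (with `2` the two-element quantale, modelled by
`Bool` with join `||` and multiplication `&&`, trivial involution). -/
structure IsTwoHom (A : Set (X → X → Q)) (γ : (X → X → Q) → Bool) : Prop where
  map_zero : γ qzero = false
  map_id : γ Qd.qid = true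
  map_sup : ∀ f ∈ A, ∀ g ∈ A, γ (f ⊔ g) = (γ f || γ g)
  map_comp : ∀ f ∈ A, ∀ g ∈ A, γ (Qd.qcomp f g) = (γ f && γ g)
  map_dag : ∀ f ∈ A, γ (Qd.qdag f) = γ f

/-- The Gelfand spectrum of `A`: the set of characters of `A`. -/
def SpecG (A : Set (X → X → Q)) : Type (max u v) :=
  {ρ : (X → X → Q) → Q // Qd.IsChar A ρ}

/-- The prime spectrum of `A`: the set of prime k*-ideals of `A`. -/
def SpecP (A : Set (X → X → Q)) : Type (max u v) :=
  {J : Set (X → X → Q) // Qd.IsPrimeKStarIdeal A J}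

/-- The Zariski topology on the Gelfand spectrum, with basic closed sets
`V_G(J) = {ρ | J ⊆ ker ρ}` for ideals `J` of `A`. -/
def zariskiG (A : Set (X → X → Q)) : TopologicalSpace (Qd.SpecG A) :=
  TopologicalSpace.generateFrom
    {U | ∃ J : Set (X → X → Q), Qd.IsIdeal A J ∧
      U = {ρ : Qd.SpecG A | J ⊆ kerChar A ρ.1}ᶜ}

/-- The Zariski topology on the prime spectrum, with basic closed sets
`V_P(J) = {K | J ⊆ K}` for ideals `J` of `A`. -/
def zariskiP (A : Set (X → X → Q)) : TopologicalSpace (Qd.SpecP A) :=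
  TopologicalSpace.generateFrom
    {U | ∃ J : Set (X → X → Q), Qd.IsIdeal A J ∧
      U = {K : Qd.SpecP A | J ⊆ K.1}ᶜ}

/-! The kernel of a character is a prime k*-ideal because `Q` has no zero divisors and `1 ≠ 0`;
conversely a prime k*-ideal `J` is the kernel of the `{0, 1}`-valued character vanishing exactly
on `J`. The basic open sets of both Zariski topologies are cut out by the same ideals, so the
topology of `Spec_G(A)` is induced from `Spec_P(A)` along `ξ_A`. An inducing surjection is a
quotient map, and it identifies exactly the inseparable points because `Spec_P(A)` is T0: its
specialization order is inclusion of ideals. -/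

theorem mul_bot (a : Q) : Qd.mul a ⊥ = ⊥ := by
  simpa using Qd.mul_sSup a ∅

theorem bot_mul (a : Q) : Qd.mul ⊥ a = ⊥ := by
  rw [Qd.mul_comm, Qd.mul_bot]

theorem inv_bot : Qd.inv (⊥ : Q) = ⊥ := by
  simpa using Qd.inv_sSup ∅

theorem qcomp_qid (f : X → X → Q) : Qd.qcomp f Qd.qid = f := by
  funext x z
  refine le_antisymm (iSup_le fun y => ?_) (le_iSup_of_le x ?_)
  · by_cases h : x = y
    · subst h; rw [qid, if_pos rfl, Qd.one_mul]
    · rw [qid, if_neg h, Qd.bot_mul]; exact bot_le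
  · rw [qid, if_pos rfl, Qd.one_mul]

theorem qdag_qdag (f : X → X → Q) : Qd.qdag (Qd.qdag f) = f := by
  funext x y
  exact Qd.inv_inv (f x y)

variable {Qd} {A : Set (X → X → Q)}

theorem isPrimeKStarIdeal_kerChar (hZDF : Qd.ZDF) (hNT : Qd.NontrivialQ) (hS : Qd.IsSubalg A)
    {ρ : (X → X → Q) → Q} (hρ : Qd.IsChar A ρ) : Qd.IsPrimeKStarIdeal A (kerChar A ρ) where
  ideal :=
    { subset := fun _ hf => hf.1
      zero_mem := ⟨hS.zero_mem, hρ.map_zero⟩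
      sup_mem := fun a ha b hb =>
        ⟨hS.sup_mem a ha.1 b hb.1, by rw [hρ.map_sup a ha.1 b hb.1, ha.2, hb.2, sup_idem]⟩
      absorb := fun f hf a ha =>
        ⟨hS.comp_mem f hf a ha.1, by rw [hρ.map_comp f hf a ha.1, ha.2, Qd.mul_bot]⟩ }
  proper h := hNT <| by
    rw [← hρ.map_id]
    exact (h.ge hS.id_mem).2
  prime f hf g hg hfg := by
    rcases hZDF _ _ ((hρ.map_comp f hf g hg).symm.trans hfg.2) with h | h
    exacts [Or.inl ⟨hf, h⟩, Or.inr ⟨hg, h⟩]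
  kideal a ha b hb hab := by
    have hsup : ρ a ⊔ ρ b = ⊥ := by rw [← hρ.map_sup a ha.1 b hb, hab.2]
    exact ⟨hb, le_bot_iff.mp (le_sup_right.trans_eq hsup)⟩
  dag_mem a ha := ⟨hS.dag_mem a ha.1, by rw [hρ.map_dag a ha.1, ha.2, Qd.inv_bot]⟩

namespace IsPrimeKStarIdeal

variable {J : Set (X → X → Q)} (hJ : Qd.IsPrimeKStarIdeal A J)
include hJ

theorem qid_notMem : Qd.qid ∉ J := fun h =>
  hJ.proper <| hJ.ideal.subset.antisymm fun f hf => by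
    simpa only [Qd.qcomp_qid] using hJ.ideal.absorb f hf Qd.qid h

theorem sup_mem_iff {f g : X → X → Q} (hf : f ∈ A) (hg : g ∈ A) :
    f ⊔ g ∈ J ↔ f ∈ J ∧ g ∈ J :=
  ⟨fun h => ⟨hJ.kideal _ h f hf (by rwa [sup_right_comm, sup_idem]),
    hJ.kideal _ h g hg (by rwa [sup_assoc, sup_idem])⟩,
   fun h => hJ.ideal.sup_mem f h.1 g h.2⟩

theorem qcomp_mem_iff (hS : Qd.IsSubalg A) {f g : X → X → Q} (hf : f ∈ A) (hg : g ∈ A) :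
    Qd.qcomp f g ∈ J ↔ f ∈ J ∨ g ∈ J := by
  refine ⟨hJ.prime f hf g hg, ?_⟩
  rintro (h | h)
  · rw [hS.comp_comm f hf g hg]
    exact hJ.ideal.absorb g hg f h
  · exact hJ.ideal.absorb f hf g h

theorem qdag_mem_iff {f : X → X → Q} : Qd.qdag f ∈ J ↔ f ∈ J :=
  ⟨fun h => Qd.qdag_qdag f ▸ hJ.dag_mem _ h, hJ.dag_mem f⟩

end IsPrimeKStarIdeal

variable (Qd) in
def indicatorChar (J : Set (X → X → Q)) : (X → X → Q) → Q :=
  fun f => if f ∈ J then ⊥ else Qd.one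

theorem isChar_indicatorChar (hS : Qd.IsSubalg A) {J : Set (X → X → Q)}
    (hJ : Qd.IsPrimeKStarIdeal A J) : Qd.IsChar A (Qd.indicatorChar J) where
  map_zero := if_pos hJ.ideal.zero_mem
  map_id := if_neg hJ.qid_notMem
  map_sup f hf g hg := by
    simp only [indicatorChar, hJ.sup_mem_iff hf hg]
    by_cases f ∈ J <;> by_cases g ∈ J <;> simp [*]
  map_comp f hf g hg := by
    simp only [indicatorChar, hJ.qcomp_mem_iff hS hf hg]
    by_cases f ∈ J <;> by_cases g ∈ J <;> simp [*, Qd.mul_bot, Qd.bot_mul, Qd.one_mul]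
  map_dag f _ := by
    simp only [indicatorChar, hJ.qdag_mem_iff]
    split_ifs
    exacts [Qd.inv_bot.symm, Qd.inv_one.symm]

theorem kerChar_indicatorChar (hNT : Qd.NontrivialQ) {J : Set (X → X → Q)}
    (hJ : Qd.IsPrimeKStarIdeal A J) : kerChar A (Qd.indicatorChar J) = J := by
  ext f
  by_cases hf : f ∈ J
  · simp [kerChar, indicatorChar, hf, hJ.ideal.subset hf]
  · simp only [kerChar, indicatorChar, Set.mem_ofPred_eq, hf, iff_false, not_and]
    exact fun _ => hNT

attribute [local instance] zariskiG zariskiP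

instance : T0Space (Qd.SpecP A) := by
  have subset_of_inseparable {K L : Qd.SpecP A} (hKL : Inseparable K L) : K.1 ⊆ L.1 := by
    have hopen : IsOpen {M : Qd.SpecP A | K.1 ⊆ M.1}ᶜ :=
      TopologicalSpace.GenerateOpen.basic _ ⟨K.1, K.2.ideal, rfl⟩
    by_contra hKL'
    exact (inseparable_iff_forall_isOpen.mp hKL _ hopen).mpr hKL' Set.Subset.rfl
  exact ⟨fun K L hKL => Subtype.ext
    ((subset_of_inseparable hKL).antisymm (subset_of_inseparable hKL.symm))⟩

section KerMap

variable (hZDF : Qd.ZDF) (hNT : Qd.NontrivialQ) (hS : Qd.IsSubalg A)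

/-- The map `ξ_A`. -/
def kerMap : Qd.SpecG A → Qd.SpecP A :=
  fun ρ => ⟨kerChar A ρ.1, isPrimeKStarIdeal_kerChar hZDF hNT hS ρ.2⟩

theorem kerMap_surjective : Function.Surjective (kerMap hZDF hNT hS) := fun K =>
  ⟨⟨_, isChar_indicatorChar hS K.2⟩, Subtype.ext (kerChar_indicatorChar hNT K.2)⟩

theorem isInducing_kerMap : Topology.IsInducing (kerMap hZDF hNT hS) := by
  refine ⟨?_⟩
  rw [zariskiG, zariskiP, induced_generateFrom_eq]
  congr 1
  ext U
  constructor
  · rintro ⟨J, hJ, rfl⟩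
    exact ⟨_, ⟨J, hJ, rfl⟩, rfl⟩
  · rintro ⟨_, ⟨J, hJ, rfl⟩, rfl⟩
    exact ⟨J, hJ, rfl⟩

end KerMap

/-- The map `ξ_A : Spec_G(A) → Spec_P(A)`, `ρ ↦ ker ρ`, is
well-defined and surjective, is a topological quotient map for the Zariski
topologies, and identifies exactly the topologically indistinguishable
characters. -/
theorem kernel_map_is_quotient
    (Qd : CommInvQuantale Q) (hZDF : Qd.ZDF) (hNT : Qd.NontrivialQ)
    (X : Type v) (A : Set (X → X → Q)) (hA : Qd.IsVN A) :
    ∃ F : Qd.SpecG A → Qd.SpecP A,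
      (∀ ρ : Qd.SpecG A, (F ρ).1 = kerChar A ρ.1) ∧
      Function.Surjective F ∧
      @Topology.IsQuotientMap _ _ (Qd.zariskiG A) (Qd.zariskiP A) F ∧
      (∀ ρ₁ ρ₂ : Qd.SpecG A, F ρ₁ = F ρ₂ ↔
        @Inseparable _ (Qd.zariskiG A) ρ₁ ρ₂) := by
  have hind := isInducing_kerMap hZDF hNT hA.1
  have hsurj := kerMap_surjective hZDF hNT hA.1
  exact ⟨kerMap hZDF hNT hA.1, fun _ => rfl, hsurj, hind.isQuotientMap_of_surjective hsurj,
    fun ρ₁ ρ₂ => inseparable_iff_eq.symm.trans hind.inseparable_iff⟩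

end CommInvQuantale
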